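/- For an alphabet of size n ≥ 2 and positive integer l, the number ε₂(n,l) of pairs (p,q) of primitive words with |p| = 2l, |q| = l, pq non-primitive, and |√(pq)| < |q| equals the sum over divisors d of l with d ≥ 4 and d not divisible by 3 of π_n(3l/d), where π_n(k) is the number of primitive words of length k over the alphabet. -/

import Mathlib

variable {A : Type*}

/-- k-fold concatenation of a word with itself. -/
def pw (w : List A) : ℕ → List A
  | 0 => []
  | n + 1 => w ++ pw w n

/-- A nonempty word is primitive if it is not a proper power. -/
def Primitive (w : List A) : Prop :=
  w ≠ [] ∧ ∀ (v : List A) (m : ℕ), w = pw v m → m = 1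

/-- Number of primitive words of length k over an n-letter alphabet. -/
noncomputable def piw (n k : ℕ) : ℕ :=
  Nat.card {w : List (Fin n) // w.length = k ∧ Primitive w}

/-- Pairs (p,q) of primitive words with |p| = 2l, |q| = l, pq non-primitive
and |√(pq)| < |q|. -/
noncomputable def eps2 (n l : ℕ) : ℕ :=
  Nat.card {pq : List (Fin n) × List (Fin n) //
    Primitive pq.1 ∧ Primitive pq.2 ∧ pq.1.length = 2 * l ∧ pq.2.length = l ∧
    ¬ Primitive (pq.1 ++ pq.2) ∧
    ∃ (u : List (Fin n)) (e : ℕ), Primitive u ∧ pq.1 ++ pq.2 = pw u e ∧ u.length < l}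

/-!
A pair `(p, q)` counted by `eps2 n l` is recovered from the primitive root `u` of `pq` and the
exponent `d` with `pq = u ^ d`: `p` and `q` are the prefix of length `2l` and the suffix of length
`l` of `u ^ d`, and `d * |u| = 3l`. The condition `|u| < l` says `d ≥ 4`; if `3 ∣ d` then
`q = u ^ (d / 3)` is a proper power, and otherwise `d ∣ 3l` gives `d ∣ l`. Conversely, for
`d ∈ Λ(l)` both pieces of `u ^ d` are primitive: a factor `w` of `u ^ d` that contains `u` and
whose length is not a multiple of `|u|` cannot be a proper power `z ^ m`, because by the
Fine–Wilf periodicity lemma `w` would have period `gcd |u| |z|`, which the primitivity of `u`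
forces to be `|u|`, whence `|u| ∣ |z| ∣ |w|`. Uniqueness of the primitive root, proved the same
way, makes `(d, u) ↦ (p, q)` injective.
-/

open List

theorem pw_succ (u : List A) (k : ℕ) : pw u (k + 1) = u ++ pw u k := rfl

theorem length_pw (u : List A) (k : ℕ) : (pw u k).length = k * u.length := by
  induction k with
  | zero => rw [Nat.zero_mul]; rfl
  | succ k ih => rw [pw_succ, length_append, ih, Nat.succ_mul, Nat.add_comm]

theorem pw_add (u : List A) (a b : ℕ) : pw u (a + b) = pw u a ++ pw u b := by
  induction a with
  | zero => rw [Nat.zero_add]; rfl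
  | succ a ih => rw [Nat.succ_add, pw_succ, pw_succ, ih, append_assoc]

theorem pw_succ' (u : List A) (k : ℕ) : pw u (k + 1) = pw u k ++ u := by
  rw [pw_add, pw_succ, pw, append_nil]

theorem drop_pw_add (u : List A) (a b : ℕ) : (pw u (a + b)).drop (a * u.length) = pw u b := by
  rw [pw_add, drop_left' (length_pw u a)]

theorem prefix_pw {u : List A} {k : ℕ} (hk : 0 < k) : u <+: pw u k := by
  obtain ⟨k, rfl⟩ := Nat.exists_eq_add_of_lt hk
  exact prefix_append _ _

theorem hasPeriod_pw (u : List A) : ∀ k, (pw u k).HasPeriod u.length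
  | 0 => nil_prefix
  | k + 1 => by
    rw [HasPeriod, pw_succ, take_left, prefix_append_right_inj, ← pw_succ, pw_succ']
    exact prefix_append _ _

theorem List.HasPeriod.prefix_pw_take_append {w : List A} {g : ℕ} (h : w.HasPeriod g) :
    ∀ k, w <+: pw (w.take g) k ++ w
  | 0 => prefix_rfl
  | k + 1 => h.trans <| by
    rw [pw_succ, append_assoc, prefix_append_right_inj]
    exact h.prefix_pw_take_append k

theorem List.HasPeriod.eq_pw {w : List A} {g m : ℕ} (h : w.HasPeriod g)
    (hm : w.length = m * g) : w = pw (w.take g) m := by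
  have hlen : (pw (w.take g) m).length = w.length := by
    rcases Nat.eq_zero_or_pos m with rfl | hm0
    · simp_all [pw]
    rw [length_pw, length_take, min_eq_left (hm ▸ Nat.le_mul_of_pos_left g hm0), hm]
  exact (prefix_of_prefix_length_le (h.prefix_pw_take_append m) (prefix_append _ _)
    hlen.ge).eq_of_length hlen.symm

theorem Nat.add_sub_gcd_le_of_dvd {a b n : ℕ} (ha : a ∣ n) (hb : b ∣ n) (hn : 0 < n) :
    a + b - a.gcd b ≤ n := by
  have half : ∀ c, c ∣ n → c = n ∨ 2 * c ≤ n := by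
    rintro c ⟨k, rfl⟩
    rcases k with _ | _ | k
    · omega
    · simp
    · right; nlinarith
  rcases half a ha with rfl | ha2
  · rw [Nat.gcd_eq_right hb]; omega
  rcases half b hb with rfl | hb2
  · rw [Nat.gcd_eq_left ha]; omega
  omega

theorem Primitive.length_pos {u : List A} (hu : Primitive u) : 0 < u.length :=
  length_pos_iff.mpr hu.1

theorem Primitive.eq_length_of_hasPeriod {u : List A} {g : ℕ} (hu : Primitive u)
    (h : u.HasPeriod g) (hg : g ∣ u.length) : g = u.length := by
  obtain ⟨m, hm⟩ := hg
  obtain rfl : m = 1 := hu.2 _ m (h.eq_pw (hm.trans (Nat.mul_comm g m)))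
  rw [hm, Nat.mul_one]

theorem Primitive.length_dvd_of_hasPeriod {u w : List A} {q : ℕ} (hu : Primitive u)
    (huw : u <:+: w) (hw : w.HasPeriod u.length) (hq : w.HasPeriod q)
    (hlen : u.length + q - u.length.gcd q ≤ w.length) : u.length ∣ q := by
  have hgcd := hu.eq_length_of_hasPeriod ((hw.gcd hq hlen).infix huw) (Nat.gcd_dvd_left _ _)
  exact hgcd ▸ Nat.gcd_dvd_right _ _

theorem primitive_of_hasPeriod {u w : List A} (hu : Primitive u) (huw : u <:+: w)
    (hw : w.HasPeriod u.length) (hndvd : ¬ u.length ∣ w.length)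
    (hlen : ∀ z m, 2 ≤ m → w.length = m * z → u.length + z - u.length.gcd z ≤ w.length) :
    Primitive w := by
  refine ⟨fun h => hndvd (by simp [h]), fun v m hvm => ?_⟩
  have hwv : w.length = m * v.length := hvm ▸ length_pw v m
  have hm0 : m ≠ 0 := by
    rintro rfl
    exact hndvd (by simp [hwv])
  by_contra hm1
  have huv := hu.length_dvd_of_hasPeriod huw hw (hvm ▸ hasPeriod_pw v m)
    (hlen _ m (by omega) hwv)
  exact hndvd (huv.trans (Dvd.intro_left m hwv.symm))

theorem Primitive.eq_of_pw_eq {u v : List A} {e f : ℕ} (hu : Primitive u) (hv : Primitive v)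
    (he : 0 < e) (hf : 0 < f) (h : pw u e = pw v f) : u = v := by
  have hw : 0 < (pw u e).length := by rw [length_pw]; exact Nat.mul_pos he hu.length_pos
  have hwu : u.length ∣ (pw u e).length := Dvd.intro_left e (length_pw u e).symm
  have hwv : v.length ∣ (pw u e).length := Dvd.intro_left f (h ▸ length_pw v f).symm
  have hperv : (pw u e).HasPeriod v.length := h ▸ hasPeriod_pw v f
  have hprefv : v <+: pw u e := h ▸ prefix_pw hf
  have huv := hu.length_dvd_of_hasPeriod (prefix_pw he).isInfix (hasPeriod_pw u e) hperv
    (Nat.add_sub_gcd_le_of_dvd hwu hwv hw)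
  have hvu := hv.length_dvd_of_hasPeriod hprefv.isInfix hperv (hasPeriod_pw u e)
    (Nat.add_sub_gcd_le_of_dvd hwv hwu hw)
  have hlen := Nat.dvd_antisymm huv hvu
  exact (prefix_of_prefix_length_le (prefix_pw he) hprefv hlen.le).eq_of_length hlen

theorem not_dvd_two_mul_of_mul_eq {d t l : ℕ} (hd3 : ¬ 3 ∣ d) (ht : 0 < t)
    (h : d * t = 3 * l) : ¬ t ∣ 2 * l := by
  rintro ⟨k, hk⟩
  have : 3 * k = 2 * d := Nat.eq_of_mul_eq_mul_left ht (by linarith)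
  omega

-- Tight for `(d, m) = (4, 2), (4, 3), (5, 2)`, where the lower bound on the gcd is needed.
theorem add_sub_gcd_le_of_mul_eq {d t m z : ℕ} (hd : 4 ≤ d) (hd3 : ¬ 3 ∣ d) (hm : 2 ≤ m)
    (h : d * t = 3 * (m * z)) : t + z - t.gcd z ≤ m * z := by
  rcases Nat.eq_zero_or_pos z with rfl | hz
  · simp
  by_cases hd6 : 6 ≤ d
  · have : 6 * t ≤ 3 * (m * z) := h ▸ Nat.mul_le_mul_right t hd6
    have : 2 * z ≤ m * z := Nat.mul_le_mul_right z hm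
    omega
  by_cases hm4 : 4 ≤ m
  · have : 4 * t ≤ 3 * (m * z) := h ▸ Nat.mul_le_mul_right t hd
    have : 4 * z ≤ m * z := Nat.mul_le_mul_right z hm4
    omega
  have le_gcd : ∀ a b s, t = a * s → z = b * s → s ≤ t.gcd z := fun a b s ht hz' =>
    Nat.le_of_dvd (Nat.gcd_pos_of_pos_right t hz)
      (Nat.dvd_gcd (Dvd.intro_left a ht.symm) (Dvd.intro_left b hz'.symm))
  interval_cases d <;> interval_cases m
  · have := le_gcd 3 2 (z / 2) (by omega) (by omega); omega
  · have := le_gcd 9 4 (z / 4) (by omega) (by omega); omega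
  · have := le_gcd 6 5 (z / 5) (by omega) (by omega); omega
  · omega

theorem primitive_take_pw {u : List A} {d l : ℕ} (hu : Primitive u) (hd : 4 ≤ d)
    (hd3 : ¬ 3 ∣ d) (h : d * u.length = 3 * l) : Primitive ((pw u d).take (2 * l)) := by
  have h4 : 4 * u.length ≤ 3 * l := h ▸ Nat.mul_le_mul_right _ hd
  have hlen : ((pw u d).take (2 * l)).length = 2 * l := by
    rw [length_take, length_pw, h]; omega
  refine primitive_of_hasPeriod hu ?_ ((hasPeriod_pw u d).infix (take_prefix _ _).isInfix) ?_ ?_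
  · exact (prefix_take_iff.mpr ⟨prefix_pw (by omega), by omega⟩).isInfix
  · rw [hlen]; exact not_dvd_two_mul_of_mul_eq hd3 hu.length_pos h
  · intro z m hm hz
    have : 2 * z ≤ m * z := Nat.mul_le_mul_right z hm
    omega

theorem primitive_drop_pw {u : List A} {d l : ℕ} (hu : Primitive u) (hd : 4 ≤ d)
    (hd3 : ¬ 3 ∣ d) (h : d * u.length = 3 * l) : Primitive ((pw u d).drop (2 * l)) := by
  have h4 : 4 * u.length ≤ 3 * l := h ▸ Nat.mul_le_mul_right _ hd
  have hlen : ((pw u d).drop (2 * l)).length = l := by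
    rw [length_drop, length_pw, h]; omega
  refine primitive_of_hasPeriod hu ?_ ((hasPeriod_pw u d).infix (drop_suffix _ _).isInfix) ?_ ?_
  · obtain ⟨d, rfl⟩ : ∃ d', d = d' + 1 := ⟨d - 1, by omega⟩
    have : 2 * l ≤ (pw u d).length := by rw [length_pw]; rw [add_mul] at h; omega
    rw [pw_succ', drop_append_of_le_length this]
    exact (suffix_append _ _).isInfix
  · rw [hlen]
    exact fun hdvd => not_dvd_two_mul_of_mul_eq hd3 hu.length_pos h (hdvd.mul_left 2)
  · intro z m hm hz
    rw [hlen] at hz ⊢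
    exact hz ▸ add_sub_gcd_le_of_mul_eq hd hd3 hm (hz ▸ h)

def IsEps2Pair (l : ℕ) (p q : List A) : Prop :=
  Primitive p ∧ Primitive q ∧ p.length = 2 * l ∧ q.length = l ∧ ¬ Primitive (p ++ q) ∧
    ∃ (u : List A) (e : ℕ), Primitive u ∧ p ++ q = pw u e ∧ u.length < l

theorem isEps2Pair_take_drop_pw {u : List A} {d l : ℕ} (hu : Primitive u) (hd : 4 ≤ d)
    (hd3 : ¬ 3 ∣ d) (h : d * u.length = 3 * l) :
    IsEps2Pair l ((pw u d).take (2 * l)) ((pw u d).drop (2 * l)) := by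
  have h4 : 4 * u.length ≤ 3 * l := h ▸ Nat.mul_le_mul_right _ hd
  have hu0 := hu.length_pos
  rw [IsEps2Pair, take_append_drop]
  refine ⟨primitive_take_pw hu hd hd3 h, primitive_drop_pw hu hd hd3 h, ?_, ?_,
    fun hp => ?_, u, d, hu, rfl, by omega⟩
  · rw [length_take, length_pw]; omega
  · rw [length_drop, length_pw]; omega
  · have := hp.2 u d rfl; omega

-- The index set `Λ(l)` of the sum.
def lambdaDivisors (l : ℕ) : Finset ℕ := l.divisors.filter (fun d => 4 ≤ d ∧ ¬ 3 ∣ d)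

theorem mem_lambdaDivisors {d l : ℕ} :
    d ∈ lambdaDivisors l ↔ (d ∣ l ∧ l ≠ 0) ∧ 4 ≤ d ∧ ¬ 3 ∣ d := by
  rw [lambdaDivisors, Finset.mem_filter, Nat.mem_divisors]

theorem IsEps2Pair.exists_pw {l : ℕ} {p q : List A} (h : IsEps2Pair l p q) :
    ∃ e ∈ lambdaDivisors l, ∃ u, Primitive u ∧ e * u.length = 3 * l ∧ p ++ q = pw u e := by
  obtain ⟨-, hq, hp, hql, -, u, e, hu, hpq, hul⟩ := h
  have he : e * u.length = 3 * l := by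
    rw [← length_pw, ← hpq, length_append, hp, hql]; ring
  have he4 : 4 ≤ e := by
    by_contra he4
    have : e * u.length ≤ 3 * u.length := Nat.mul_le_mul_right _ (by omega)
    omega
  have he3 : ¬ 3 ∣ e := by
    rintro ⟨k, rfl⟩
    have hk : k * u.length = l := by linarith
    have hqk : q = pw u k := by
      rw [← drop_left' (l₂ := q) hp, hpq, show 3 * k = 2 * k + k by ring, ← hk, ← Nat.mul_assoc,
        drop_pw_add]
    have := hq.2 u k hqk
    subst this
    omega
  have hel : e ∣ l := (Nat.Coprime.dvd_of_dvd_mul_left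
    ((Nat.Prime.coprime_iff_not_dvd Nat.prime_three).mpr he3).symm (Dvd.intro _ he))
  exact ⟨e, mem_lambdaDivisors.mpr ⟨⟨hel, by omega⟩, he4, he3⟩, u, hu, he, hpq⟩

theorem mul_length_eq_of_mem_lambdaDivisors {d l : ℕ} {u : List A} (hd : d ∈ lambdaDivisors l)
    (hu : u.length = 3 * l / d) : d * u.length = 3 * l :=
  hu ▸ Nat.mul_div_cancel' ((mem_lambdaDivisors.mp hd).1.1.mul_left 3)

def powerSplit (l : ℕ)
    (x : Σ d : lambdaDivisors l, {u : List A // u.length = 3 * l / d ∧ Primitive u}) :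
    {pq : List A × List A // IsEps2Pair l pq.1 pq.2} :=
  ⟨((pw x.2.1 x.1).take (2 * l), (pw x.2.1 x.1).drop (2 * l)),
    isEps2Pair_take_drop_pw x.2.2.2 (mem_lambdaDivisors.mp x.1.2).2.1
      (mem_lambdaDivisors.mp x.1.2).2.2 (mul_length_eq_of_mem_lambdaDivisors x.1.2 x.2.2.1)⟩

theorem powerSplit_injective (l : ℕ) : Function.Injective (powerSplit (A := A) l) := by
  rintro ⟨⟨d₁, hd₁⟩, u₁, hu₁l, hu₁⟩ ⟨⟨d₂, hd₂⟩, u₂, hu₂l, hu₂⟩ h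
  have hpw : pw u₁ d₁ = pw u₂ d₂ := by
    simp only [powerSplit, Subtype.mk.injEq, Prod.mk.injEq] at h
    rw [← take_append_drop (2 * l) (pw u₁ d₁), h.1, h.2, take_append_drop]
  have hd₁4 := (mem_lambdaDivisors.mp hd₁).2.1
  have hd₂4 := (mem_lambdaDivisors.mp hd₂).2.1
  obtain rfl := hu₁.eq_of_pw_eq hu₂ (by omega) (by omega) hpw
  obtain rfl : d₁ = d₂ := Nat.eq_of_mul_eq_mul_right hu₁.length_pos <| by
    rw [mul_length_eq_of_mem_lambdaDivisors hd₁ hu₁l,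
      mul_length_eq_of_mem_lambdaDivisors hd₂ hu₂l]
  rfl

theorem powerSplit_surjective (l : ℕ) : Function.Surjective (powerSplit (A := A) l) := by
  rintro ⟨⟨p, q⟩, h⟩
  obtain ⟨e, he, u, hu, heu, hpq⟩ := h.exists_pw
  have he0 : 0 < e := by have := (mem_lambdaDivisors.mp he).2.1; omega
  refine ⟨⟨⟨e, he⟩, u, by rw [← heu, Nat.mul_div_cancel_left _ he0], hu⟩, Subtype.ext ?_⟩
  simp only [powerSplit, ← hpq, take_left' h.2.2.1, drop_left' h.2.2.1]

instance (k : ℕ) [Finite A] : Finite {w : List A // w.length = k ∧ Primitive w} :=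
  ((List.finite_length_eq A k).subset fun _ hw => hw.1).to_subtype

theorem eps2_eq_sum_general (n l : ℕ) :
    eps2 n l = ∑ d ∈ l.divisors.filter (fun d => 4 ≤ d ∧ ¬ 3 ∣ d), piw n (3 * l / d) := by
  let e := Equiv.ofBijective (powerSplit (A := Fin n) l)
    ⟨powerSplit_injective l, powerSplit_surjective l⟩
  calc eps2 n l = ∑ d : lambdaDivisors l, piw n (3 * l / d) :=
        (Nat.card_congr e).symm.trans Nat.card_sigma
    _ = _ := Finset.sum_coe_sort (lambdaDivisors l) fun d => piw n (3 * l / d)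

theorem eps2_eq_sum (n l : ℕ) (hn : 2 ≤ n) (hl : 0 < l) :
    eps2 n l = ∑ d ∈ l.divisors.filter (fun d => 4 ≤ d ∧ ¬ 3 ∣ d), piw n (3 * l / d) :=
  eps2_eq_sum_general n l
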